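/- A CNF formula F is lean if and only if for every clause C ∈ F there is no autarky of F satisfying C; equivalently, the lean kernel of F equals the set of clauses of F not satisfied by any autarky of F. -/

import Mathlib

/-- Variables are natural numbers. -/
abbrev Var := Nat
/-- A literal is a variable with a polarity. -/
abbrev Lit := Var × Bool
/-- A clause is a set of literals. -/
abbrev Clause := Set Lit
/-- A CNF formula is a set of clauses. -/
abbrev CNF := Set Clause
/-- A partial assignment maps variables to optional Boolean values. -/
abbrev PAssign := Var → Option Bool

/-- φ touches C if some variable of C is in the domain of φ. -/
def touches (phi : PAssign) (C : Clause) : Prop := ∃ l ∈ C, phi l.1 ≠ none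
/-- φ satisfies C if some literal of C is made true by φ. -/
def psat (phi : PAssign) (C : Clause) : Prop := ∃ l ∈ C, phi l.1 = some l.2
/-- φ is an autarky for F: every clause of F touched by φ is satisfied by φ. -/
def Autarky (phi : PAssign) (F : CNF) : Prop := ∀ C ∈ F, touches phi C → psat phi C
/-- F[φ]: the clauses of F not satisfied by φ. -/
def reduce (F : CNF) (phi : PAssign) : CNF := {C ∈ F | ¬ psat phi C}
/-- A total assignment θ satisfies a clause. -/
def csat (theta : Var → Bool) (C : Clause) : Prop := ∃ l ∈ C, theta l.1 = l.2
/-- Satisfiability of a CNF. -/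
def Sat (F : CNF) : Prop := ∃ theta : Var → Bool, ∀ C ∈ F, csat theta C
/-- Composition ψ∘φ: agrees with ψ on dom ψ, with φ on dom φ \ dom ψ. -/
def comp (psi phi : PAssign) : PAssign := fun v => (psi v).elim (phi v) some
/-- The empty (trivial) partial assignment. -/
def emptyPA : PAssign := fun _ => none
/-- The variables occurring in F. -/
def varsOf (F : CNF) : Set Var := {v | ∃ C ∈ F, ∃ l ∈ C, l.1 = v}
/-- F is lean: every autarky for F is trivial on the variables of F. -/
def IsLean (F : CNF) : Prop := ∀ phi : PAssign, Autarky phi F → ∀ v ∈ varsOf F, phi v = none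
/-- The lean kernel: union of all lean subformulas. -/
def leanKernel (F : CNF) : CNF := ⋃₀ {G | G ⊆ F ∧ IsLean G}


/-!
An autarky of `F` that satisfies a clause of `F` is defined on a variable of `F`, and conversely
an autarky defined on a variable of `F` touches, hence satisfies, a clause of `F`; this gives the
first equivalence. An autarky of `F` is an autarky of every subformula, so a lean subformula
contains no clause satisfied by an autarky of `F`. For the converse, autarkies are closed under
composition and under unions of chains, so Zorn's lemma yields one autarky `Φ` satisfying every
clause that any autarky satisfies. `Φ` touches no clause of the remaining subformula `K`, so
composing `Φ` with an autarky of `K` gives an autarky of `F`; hence `K` is lean.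
-/

theorem psat.touches {φ : PAssign} {C : Clause} (h : psat φ C) : touches φ C :=
  let ⟨l, hl, hφl⟩ := h
  ⟨l, hl, by simp [hφl]⟩

theorem Autarky.mono {φ : PAssign} {F G : CNF} (h : Autarky φ F) (hGF : G ⊆ F) : Autarky φ G :=
  fun C hC => h C (hGF hC)

theorem isLean_iff_forall_autarky_not_psat {F : CNF} :
    IsLean F ↔ ∀ C ∈ F, ∀ φ : PAssign, Autarky φ F → ¬ psat φ C := by
  constructor
  · rintro hF C hC φ hφ ⟨l, hl, hφl⟩
    simp [hF φ hφ l.1 ⟨C, hC, l, hl, rfl⟩] at hφl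
  · rintro hF φ hφ _ ⟨C, hC, l, hl, rfl⟩
    by_contra hφl
    exact hF C hC φ hφ (hφ C hC ⟨l, hl, hφl⟩)

section Composition

variable {ψ φ : PAssign} {C : Clause}

theorem psat_comp_left (h : psat ψ C) : psat (comp ψ φ) C :=
  let ⟨l, hl, hψl⟩ := h
  ⟨l, hl, by simp [comp, hψl]⟩

theorem comp_apply_of_not_touches (h : ¬ touches ψ C) {l : Lit} (hl : l ∈ C) :
    comp ψ φ l.1 = φ l.1 := by
  have hψl : ψ l.1 = none := by
    by_contra hψl
    exact h ⟨l, hl, hψl⟩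
  simp [comp, hψl]

theorem psat_comp_of_not_touches (h : ¬ touches ψ C) (hφ : psat φ C) : psat (comp ψ φ) C :=
  let ⟨l, hl, hφl⟩ := hφ
  ⟨l, hl, (comp_apply_of_not_touches h hl).trans hφl⟩

theorem Autarky.comp_of_untouched {F : CNF} (hψ : Autarky ψ F)
    (hφ : Autarky φ {C ∈ F | ¬ touches ψ C}) : Autarky (comp ψ φ) F := by
  intro C hC hcomp
  by_cases hψC : touches ψ C
  · exact psat_comp_left (hψ C hC hψC)
  · have hφC : touches φ C :=
      let ⟨l, hl, hl'⟩ := hcomp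
      ⟨l, hl, (comp_apply_of_not_touches hψC hl).symm.trans_ne hl'⟩
    exact psat_comp_of_not_touches hψC (hφ C ⟨hC, hψC⟩ hφC)

theorem Autarky.comp {F : CNF} (hψ : Autarky ψ F) (hφ : Autarky φ F) : Autarky (comp ψ φ) F :=
  hψ.comp_of_untouched (hφ.mono (Set.sep_subset _ _))

end Composition

def Extends (ψ φ : PAssign) : Prop := ∀ v b, φ v = some b → ψ v = some b

theorem Extends.trans {χ ψ φ : PAssign} (hχ : Extends χ ψ) (hψ : Extends ψ φ) : Extends χ φ :=
  fun v b h => hχ v b (hψ v b h)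

section Chains

variable {c : Set PAssign} (hc : IsChain (fun φ ψ => Extends ψ φ) c)
include hc

theorem IsChain.extends_apply_eq {φ φ' : PAssign} (hφ : φ ∈ c) (hφ' : φ' ∈ c) {v : Var} {b : Bool}
    (hφv : φ v = some b) (hφ'v : φ' v ≠ none) : φ' v = some b := by
  obtain ⟨b', hb'⟩ := Option.ne_none_iff_exists'.mp hφ'v
  by_cases heq : φ = φ'
  · exact heq ▸ hφv
  rcases hc hφ hφ' heq with hext | hext
  · exact hext v b hφv
  · rw [hb', ← Option.some_inj, ← hφv, hext v b' hb']

theorem exists_autarky_extends_chain {F : CNF} (hcF : ∀ φ ∈ c, Autarky φ F) :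
    ∃ ψ, Autarky ψ F ∧ ∀ φ ∈ c, Extends ψ φ := by
  classical
  let ψ : PAssign := fun v => if h : ∃ φ ∈ c, φ v ≠ none then h.choose v else none
  have hψ : ∀ φ ∈ c, Extends ψ φ := by
    intro φ hφ v b hφv
    have h : ∃ φ ∈ c, φ v ≠ none := ⟨φ, hφ, by simp [hφv]⟩
    simp only [ψ, dif_pos h]
    exact hc.extends_apply_eq hφ h.choose_spec.1 hφv h.choose_spec.2
  refine ⟨ψ, ?_, hψ⟩
  rintro C hC ⟨l, hl, hψl⟩
  have h : ∃ φ ∈ c, φ l.1 ≠ none := by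
    by_contra h
    simp [ψ, dif_neg h] at hψl
  obtain ⟨φ, hφ, hφl⟩ := h
  obtain ⟨l', hl', hφl'⟩ := hcF φ hφ C hC ⟨l, hl, hφl⟩
  exact ⟨l', hl', hψ φ hφ _ _ hφl'⟩

end Chains

theorem exists_autarky_psat_of_psat (F : CNF) :
    ∃ Φ, Autarky Φ F ∧ ∀ φ, Autarky φ F → ∀ C ∈ F, psat φ C → psat Φ C := by
  obtain ⟨⟨Φ, hΦ⟩, hmax⟩ := exists_maximal_of_chains_bounded
    (r := fun φ ψ : {φ // Autarky φ F} => Extends ψ.1 φ.1)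
    (fun c hc => by
      obtain ⟨ψ, hψ, hext⟩ := exists_autarky_extends_chain
        (hc.image_of_map_rel _ _ Subtype.val fun _ _ h => h) (by rintro _ ⟨φ, -, rfl⟩; exact φ.2)
      exact ⟨⟨ψ, hψ⟩, fun φ hφ => hext φ.1 ⟨φ, hφ, rfl⟩⟩)
    (fun h₁ h₂ => h₂.trans h₁)
  refine ⟨Φ, hΦ, fun φ hφ C hC ⟨l, hl, hφl⟩ => hΦ C hC ⟨l, hl, fun hΦl => ?_⟩⟩
  -- `comp Φ φ` extends `Φ`, so by maximality `Φ` is already defined wherever `φ` is.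
  have hback := hmax ⟨comp Φ φ, hΦ.comp hφ⟩ fun v b (h : Φ v = some b) => by simp [comp, h]
  simpa [hΦl] using hback l.1 l.2 (by simp [comp, hΦl, hφl])

theorem leanKernel_subset (F : CNF) :
    leanKernel F ⊆ {C ∈ F | ∀ φ : PAssign, Autarky φ F → ¬ psat φ C} := by
  rintro C ⟨G, ⟨hGF, hG⟩, hCG⟩
  exact ⟨hGF hCG, fun φ hφ => isLean_iff_forall_autarky_not_psat.mp hG C hCG φ (hφ.mono hGF)⟩

theorem isLean_sep_forall_autarky_not_psat (F : CNF) :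
    IsLean {C ∈ F | ∀ φ : PAssign, Autarky φ F → ¬ psat φ C} := by
  obtain ⟨Φ, hΦ, hΦmax⟩ := exists_autarky_psat_of_psat F
  have huntouched : {C ∈ F | ¬ touches Φ C} ⊆ {C ∈ F | ∀ φ, Autarky φ F → ¬ psat φ C} :=
    fun D ⟨hDF, hD⟩ => ⟨hDF, fun ψ hψ hψD => hD (hΦmax ψ hψ D hDF hψD).touches⟩
  rw [isLean_iff_forall_autarky_not_psat]
  rintro C ⟨hCF, hC⟩ φ hφ hφC
  have hΦC : ¬ touches Φ C := fun h => hC Φ hΦ (hΦ C hCF h)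
  exact hC _ (hΦ.comp_of_untouched (hφ.mono huntouched)) (psat_comp_of_not_touches hΦC hφC)

theorem lean_iff_no_autarky_satisfies (F : CNF) :
    (IsLean F ↔ ∀ C ∈ F, ∀ phi : PAssign, Autarky phi F → ¬ psat phi C) ∧
    leanKernel F = {C ∈ F | ∀ phi : PAssign, Autarky phi F → ¬ psat phi C} :=
  ⟨isLean_iff_forall_autarky_not_psat,
    (leanKernel_subset F).antisymm
      (Set.subset_sUnion_of_mem ⟨Set.sep_subset _ _, isLean_sep_forall_autarky_not_psat F⟩)⟩
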